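/- Let T_s(k) = k_r · P̃_s(k) / k, where P̃_s(k) = S(k)γ_ab e^{−γ_th/(γ_ab L)} / (γ_th γ_eb(1+(2^k−2)/(3L)) + S(k)γ_ab) and S(k)=2^k−1. Then T_s(k+1) < T_s(k) for all integers k ≥ 1 whenever γ_th γ_eb / (3L γ_ab) is sufficiently small; in particular, since P̃_s(k) ≤ e^{−γ_th/(γ_ab L)} for all k, T_s(k) ≤ k_r e^{−γ_th/(γ_ab L)}/k, which tends to 0 as k → ∞. -/

import Mathlib

open Real Filter

set_option maxHeartbeats 1600000 in
/-- Properties of the successful transmission throughput `T_s(k) = k_r·P̃_s(k)/k`: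
it is eventually strictly decreasing in `k` when the jamming ratio is small enough,
it is bounded by `k_r·exp(−γ_th/(γ_ab L))/k`, and it tends to `0` as `k → ∞`. -/
theorem throughput_properties (γth γab L kr : ℝ)
    (hγth : 0 < γth) (hγab : 0 < γab) (hL : 0 < L) (hkr : 0 < kr) :
    (∃ δ : ℝ, 0 < δ ∧ ∀ γeb : ℝ, 0 < γeb → γth * γeb / (3 * L * γab) < δ →
      ∀ k : ℕ, 1 ≤ k →
        (kr * ((2 ^ (k + 1) - 1) * γab * Real.exp (-(γth / (γab * L)))
            / (γth * γeb * (1 + (2 ^ (k + 1) - 2) / (3 * L)) + (2 ^ (k + 1) - 1) * γab))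
          / (k + 1 : ℝ)) <
        (kr * ((2 ^ k - 1) * γab * Real.exp (-(γth / (γab * L)))
            / (γth * γeb * (1 + (2 ^ k - 2) / (3 * L)) + (2 ^ k - 1) * γab))
          / (k : ℝ))) ∧
    (∀ γeb : ℝ, 0 < γeb → ∀ k : ℕ, 1 ≤ k →
      kr * ((2 ^ k - 1) * γab * Real.exp (-(γth / (γab * L)))
          / (γth * γeb * (1 + (2 ^ k - 2) / (3 * L)) + (2 ^ k - 1) * γab)) / (k : ℝ)
        ≤ kr * Real.exp (-(γth / (γab * L))) / (k : ℝ)) ∧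
    (∀ γeb : ℝ, 0 < γeb →
      Tendsto (fun k : ℕ =>
        kr * ((2 ^ k - 1) * γab * Real.exp (-(γth / (γab * L)))
          / (γth * γeb * (1 + (2 ^ k - 2) / (3 * L)) + (2 ^ k - 1) * γab)) / (k : ℝ))
        atTop (nhds 0)) := by
  have hE : 0 < Real.exp (-(γth / (γab * L))) := Real.exp_pos _
  have h3L : (0:ℝ) < 3 * L := by linarith
  -- positivity of the denominator, for k ≥ 1
  have hD : ∀ γeb : ℝ, 0 < γeb → ∀ k : ℕ, 1 ≤ k →
      0 < γth * γeb * (1 + ((2:ℝ) ^ k - 2) / (3 * L)) + ((2:ℝ) ^ k - 1) * γab := by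
    intro γeb hγeb k hk
    have h2 : (2:ℝ) ≤ 2 ^ k := by
      calc (2:ℝ) = 2 ^ 1 := by norm_num
      _ ≤ 2 ^ k := pow_le_pow_right₀ one_le_two hk
    have hu : 0 ≤ ((2:ℝ) ^ k - 2) / (3 * L) := div_nonneg (by linarith) h3L.le
    have hbe : 0 < γth * γeb := mul_pos hγth hγeb
    nlinarith
  -- the upper bound (part 2)
  have hbound : ∀ γeb : ℝ, 0 < γeb → ∀ k : ℕ, 1 ≤ k →
      kr * ((2 ^ k - 1) * γab * Real.exp (-(γth / (γab * L)))
          / (γth * γeb * (1 + (2 ^ k - 2) / (3 * L)) + (2 ^ k - 1) * γab)) / (k : ℝ)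
        ≤ kr * Real.exp (-(γth / (γab * L))) / (k : ℝ) := by
    intro γeb hγeb k hk
    have hk0 : (0:ℝ) < (k : ℝ) := by exact_mod_cast hk
    have hDk := hD γeb hγeb k hk
    have h2 : (2:ℝ) ≤ 2 ^ k := by
      calc (2:ℝ) = 2 ^ 1 := by norm_num
      _ ≤ 2 ^ k := pow_le_pow_right₀ one_le_two hk
    have hu : 0 ≤ ((2:ℝ) ^ k - 2) / (3 * L) := div_nonneg (by linarith) h3L.le
    have hbe : 0 < γth * γeb := mul_pos hγth hγeb
    gcongr
    rw [div_le_iff₀ hDk]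
    nlinarith [mul_nonneg hE.le (mul_nonneg hbe.le (by linarith : (0:ℝ) ≤ 1 + ((2:ℝ) ^ k - 2) / (3 * L)))]
  refine ⟨⟨1 / (3 * L), by positivity, ?_⟩, hbound, ?_⟩
  · intro γeb hγeb hδ k hk
    have hbe : 0 < γth * γeb := mul_pos hγth hγeb
    have hba : γth * γeb < γab := by
      rw [div_lt_div_iff₀ (by positivity) h3L] at hδ
      nlinarith
    have hk0 : (0:ℝ) < (k : ℝ) := by exact_mod_cast hk
    have hkS : (k : ℝ) ≤ 2 ^ k - 1 := by
      have := Nat.lt_two_pow_self (n := k)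
      have : (k : ℝ) + 1 ≤ 2 ^ k := by exact_mod_cast this
      linarith
    have h2 : (2:ℝ) ≤ 2 ^ k := by
      calc (2:ℝ) = 2 ^ 1 := by norm_num
      _ ≤ 2 ^ k := pow_le_pow_right₀ one_le_two hk
    have hDk := hD γeb hγeb k hk
    have hDk1 := hD γeb hγeb (k + 1) (by omega)
    have hp : (2:ℝ) ^ (k + 1) = 2 * 2 ^ k := by rw [pow_succ]; ring
    set S : ℝ := 2 ^ k - 1 with hSdef
    set b : ℝ := γth * γeb with hbdef
    set D : ℝ := b * (1 + ((2:ℝ) ^ k - 2) / (3 * L)) + S * γab with hDdef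
    set D' : ℝ := b * (1 + ((2:ℝ) ^ (k + 1) - 2) / (3 * L)) + ((2:ℝ) ^ (k + 1) - 1) * γab with hD'def
    have hcore : ((2:ℝ) ^ (k + 1) - 1) * (D * (k : ℝ)) < S * (D' * ((k : ℝ) + 1)) := by
      have hS1 : (1:ℝ) ≤ S := by simp only [hSdef]; linarith
      have e1 : ((2:ℝ) ^ (k + 1) - 1) = 2 * S + 1 := by simp only [hSdef]; rw [hp]; ring
      have e2 : ((2:ℝ) ^ (k + 1) - 2) / (3 * L) = (2 * S) / (3 * L) := by
        simp only [hSdef]; rw [hp]; ring_nf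
      rw [e1, hDdef, hD'def, e1, e2]
      have eu : ((2:ℝ) ^ k - 2) / (3 * L) = (S - 1) / (3 * L) := by
        simp only [hSdef]; ring_nf
      rw [eu]
      set t : ℝ := 1 / (3 * L) with htdef
      have ht : 0 < t := by positivity
      have eS : (S - 1) / (3 * L) = (S - 1) * t := by rw [htdef]; ring
      have eS' : (2 * S) / (3 * L) = (2 * S) * t := by rw [htdef]; ring
      rw [eS, eS']
      nlinarith [mul_nonneg (mul_nonneg hbe.le ht.le) (by nlinarith : (0:ℝ) ≤ 2 * S ^ 2 + (k:ℝ) * S + (k:ℝ)),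
        mul_nonneg (sub_nonneg.2 hkS) (by linarith : (0:ℝ) ≤ S + 1),
        mul_pos (sub_pos.2 hba) (by nlinarith : (0:ℝ) < S * (2 * S + 1)),
        mul_pos hγab (by nlinarith : (0:ℝ) < S * (2 * S + 1))]
    rw [← mul_div_assoc, ← mul_div_assoc, div_div, div_div,
      div_lt_div_iff₀ (mul_pos hDk1 (by positivity)) (mul_pos hDk hk0)]
    nlinarith [mul_lt_mul_of_pos_left hcore
      (by positivity : (0:ℝ) < kr * γab * Real.exp (-(γth / (γab * L))))]
  · intro γeb hγeb
    apply squeeze_zero' ?_ ?_ (tendsto_const_div_atTop_nhds_zero_nat (kr * Real.exp (-(γth / (γab * L)))))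
    · filter_upwards [eventually_ge_atTop 1] with k hk
      have hDk := hD γeb hγeb k hk
      have h2 : (2:ℝ) ≤ 2 ^ k := by
        calc (2:ℝ) = 2 ^ 1 := by norm_num
        _ ≤ 2 ^ k := pow_le_pow_right₀ one_le_two hk
      have hk0 : (0:ℝ) ≤ (k : ℝ) := Nat.cast_nonneg k
      apply div_nonneg _ hk0
      apply mul_nonneg hkr.le
      apply div_nonneg _ hDk.le
      have : (0:ℝ) ≤ 2 ^ k - 1 := by linarith
      positivity
    · filter_upwards [eventually_ge_atTop 1] with k hk
      exact hbound γeb hγeb k hk
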